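/- Let ρ > 0 and define, for J ∈ M₃(ℝ), W(J) = 𝓕[ρ M_J] and V(J) = ½∥J∥² − ρ ln Z(J). Then: (i) W(J) = V(J) − ½∥J − ρ 𝒥[M_J]∥² + ρ ln ρ for all J ∈ M₃(ℝ); and (ii) J is a critical point of W (DW(J) = 0) if and only if J is a critical point of V (DV(J) = 0), which holds if and only if J = ρ 𝒥[M_J]. -/

import Mathlib

open Matrix MeasureTheory

/-- The space of `3 × 3` real matrices. -/
abbrev Mat3 := Matrix (Fin 3) (Fin 3) ℝ

instance : MeasurableSpace Mat3 := inferInstanceAs (MeasurableSpace (Fin 3 → Fin 3 → ℝ))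

attribute [local instance] Matrix.normedAddCommGroup Matrix.normedSpace

/-- `SO₃(ℝ)`: real `3 × 3` matrices with `AᵀA = I₃` and `det A = 1`. -/
def SO3 : Set Mat3 := {A | Aᵀ * A = 1 ∧ A.det = 1}

/-- The inner product `A·B = ½ Tr(ABᵀ)` on `M₃(ℝ)`. -/
noncomputable def mdot (A B : Mat3) : ℝ := (1 / 2) * (A * Bᵀ).trace

/-- `μ` is the Haar probability measure of `SO₃(ℝ)`, viewed as a measure on `M₃(ℝ)`. -/
def IsHaarSO3 (μ : Measure Mat3) : Prop :=
  IsProbabilityMeasure μ ∧ μ SO3ᶜ = 0 ∧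
    ∀ P ∈ SO3, Measure.map (fun A => P * A) μ = μ

/-- The normalization constant `Z(J) = ∫ exp(J·A) dμ(A)`. -/
noncomputable def Z (μ : Measure Mat3) (J : Mat3) : ℝ := ∫ A, Real.exp (mdot J A) ∂μ

/-- The generalized von Mises density `M_J(A) = exp(J·A)/Z(J)`. -/
noncomputable def vonMises (μ : Measure Mat3) (J : Mat3) (A : Mat3) : ℝ :=
  Real.exp (mdot J A) / Z μ J

/-- The first moment `𝒥[f] = ∫ A f(A) dμ(A)`, taken entrywise. -/
noncomputable def Jcal (μ : Measure Mat3) (f : Mat3 → ℝ) : Mat3 :=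
  Matrix.of fun i j => ∫ A, f A * A i j ∂μ

/-- The free energy `𝓕[f] = ∫ f ln f dμ − ½∥𝒥[f]∥²`. -/
noncomputable def freeEnergy (μ : Measure Mat3) (f : Mat3 → ℝ) : ℝ :=
  (∫ A, f A * Real.log (f A) ∂μ) - (1 / 2) * mdot (Jcal μ f) (Jcal μ f)

/-- The potential `V(J) = ½∥J∥² − ρ ln Z(J)`. -/
noncomputable def V (μ : Measure Mat3) (ρ : ℝ) (J : Mat3) : ℝ :=
  (1 / 2) * mdot J J - ρ * Real.log (Z μ J)

/-- The function `W(J) = 𝓕[ρ M_J]`. -/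
noncomputable def W (μ : Measure Mat3) (ρ : ℝ) (J : Mat3) : ℝ :=
  freeEnergy μ (fun A => ρ * vonMises μ J A)

/-!
Part (i) is a direct computation: `log (ρ M_J(A)) = log ρ + J·A - log Z(J)`, integrated against
`ρ M_J`, using `∫ M_J = 1` and `∫ M_J(A) (J·A) = J·𝒥[M_J]`.

For (ii), differentiating under the integral gives `D(log Z)(J) = 𝒥[M_J]·`, hence
`DV(J) = B·` with `B = J - ρ𝒥[M_J]`, and `D_J 𝒥[M_J] = C_J`, the covariance operator of the
law `M_J μ`. Differentiating (i) then gives `DW(J) H = ρ B·C_J H`. Since `B·C_J B` is the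
variance of `A ↦ B·A` under `M_J μ`, `DW(J) = 0` forces `B·A` to be `μ`-a.e. constant, and
left invariance of `μ` (tested against finitely many rotations) then forces `B = 0`.
-/

section

/- The norm topology, so that structures derived from the local normed instance (such as
`ContinuousENorm Mat3`) see the topology used by `Continuous`. It stays local: the final statement
is elaborated with the product topology of `Matrix`, which is defeq to it but not syntactically. -/
local instance : TopologicalSpace Mat3 :=
  (Matrix.normedAddCommGroup : NormedAddCommGroup Mat3).toUniformSpace.toTopologicalSpace

local instance : BorelSpace Mat3 := inferInstanceAs (BorelSpace (Fin 3 → Fin 3 → ℝ))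

lemma mdot_comm (A B : Mat3) : mdot A B = mdot B A := by
  rw [mdot, mdot, ← trace_transpose, transpose_mul, transpose_transpose]

lemma mdot_eq_sum (A B : Mat3) : mdot A B = (∑ i, ∑ j, A i j * B i j) / 2 := by
  simp only [mdot, trace, diag, mul_apply, transpose_apply]
  ring

lemma mdot_self_eq_zero {A : Mat3} : mdot A A = 0 ↔ A = 0 := by
  rw [mdot, ← conjTranspose_eq_transpose_of_trivial, mul_eq_zero,
    trace_mul_conjTranspose_self_eq_zero_iff]
  norm_num

lemma mdot_mul_right (B P A : Mat3) : mdot B (P * A) = mdot (B * Aᵀ) P := by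
  simp only [mdot, transpose_mul, Matrix.mul_assoc]

noncomputable def mdotL : Mat3 →L[ℝ] Mat3 →L[ℝ] ℝ :=
  LinearMap.toContinuousLinearMap <|
    (LinearMap.toContinuousLinearMap : (Mat3 →ₗ[ℝ] ℝ) ≃ₗ[ℝ] _).toLinearMap ∘ₗ
      LinearMap.mk₂ ℝ mdot
        (fun _ _ _ => by simp [mdot, Matrix.add_mul, mul_add])
        (fun _ _ _ => by simp [mdot, mul_left_comm])
        (fun _ _ _ => by simp [mdot, mul_add])
        (fun _ _ _ => by simp [mdot, mul_left_comm])

@[simp] lemma mdotL_apply (A B : Mat3) : mdotL A B = mdot A B := rfl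

@[simp] lemma mdot_smul_right (c : ℝ) (A B : Mat3) : mdot A (c • B) = c * mdot A B :=
  map_smul (mdotL A) c B

@[simp] lemma mdot_smul_left (c : ℝ) (A B : Mat3) : mdot (c • A) B = c * mdot A B := by
  rw [mdot_comm, mdot_smul_right, mdot_comm]

@[simp] lemma mdot_sub_left (A B C : Mat3) : mdot (A - B) C = mdot A C - mdot B C := by
  simp only [← mdotL_apply, map_sub, _root_.sub_apply]

@[simp] lemma mdot_sub_right (A B C : Mat3) : mdot A (B - C) = mdot A B - mdot A C :=
  map_sub (mdotL A) B C

lemma mdotL_eq_zero_iff {B : Mat3} : mdotL B = 0 ↔ B = 0 :=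
  ⟨fun h => mdot_self_eq_zero.1 (by rw [← mdotL_apply, h, _root_.zero_apply]),
    fun h => h ▸ map_zero _⟩

lemma hasFDerivAt_mdot_left (A x : Mat3) : HasFDerivAt (fun x => mdot x A) (mdotL A) x := by
  convert (mdotL A).hasFDerivAt using 1
  exact funext fun x => mdot_comm x A

lemma hasFDerivAt_half_mdot_self (J : Mat3) :
    HasFDerivAt (fun x => 1 / 2 * mdot x x) (mdotL J) J := by
  have h := (mdotL.hasFDerivAt_of_bilinear (hasFDerivAt_id J) (hasFDerivAt_id J)).const_mul
    (1 / 2)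
  refine h.congr_fderiv (ContinuousLinearMap.ext fun H => ?_)
  simp [mdot_comm H J]
  ring

@[fun_prop]
lemma Continuous.mdot {X : Type*} [TopologicalSpace X] {f g : X → Mat3} (hf : Continuous f)
    (hg : Continuous g) : Continuous fun x => _root_.mdot (f x) (g x) :=
  mdotL.continuous₂.comp₂ hf hg

@[fun_prop]
lemma continuous_vonMises (μ : Measure Mat3) (J : Mat3) : Continuous (vonMises μ J) := by
  unfold vonMises
  fun_prop

lemma integral_mdot {μ : Measure Mat3} {f : Mat3 → Mat3} (hf : Integrable f μ) (B : Mat3) :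
    ∫ A, mdot B (f A) ∂μ = mdot B (∫ A, f A ∂μ) :=
  (mdotL B).integral_comp_comm hf

lemma Jcal_eq_integral_smul {μ : Measure Mat3} {f : Mat3 → ℝ}
    (hf : Integrable (fun A => f A • A) μ) : Jcal μ f = ∫ A, f A • A ∂μ := by
  ext i j
  have := (LinearMap.toContinuousLinearMap (entryLinearMap ℝ ℝ i j)).integral_comp_comm hf
  simpa [Jcal] using this

lemma integral_vonMises_smul {E : Type*} [NormedAddCommGroup E] [NormedSpace ℝ E]
    (μ : Measure Mat3) (J : Mat3) (f : Mat3 → E) :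
    ∫ A, vonMises μ J A • f A ∂μ = (Z μ J)⁻¹ • ∫ A, Real.exp (mdot J A) • f A ∂μ := by
  simp only [← integral_smul, smul_smul, vonMises, div_eq_inv_mul]

noncomputable def vonMisesCov (μ : Measure Mat3) (J : Mat3) : Mat3 →L[ℝ] Mat3 :=
  (∫ A, vonMises μ J A • (mdotL A).smulRight A ∂μ) -
    (mdotL (Jcal μ (vonMises μ J))).smulRight (Jcal μ (vonMises μ J))

section CompactSupport

variable {μ : Measure Mat3} [IsFiniteMeasure μ] {K : Set Mat3}

lemma integrable_of_continuous (hK : IsCompact K) (hμ : ∀ᵐ A ∂μ, A ∈ K)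
    {E : Type*} [NormedAddCommGroup E] {f : Mat3 → E} (hf : Continuous f) : Integrable f μ := by
  rw [← Measure.restrict_eq_self_of_ae_mem hμ]
  exact hf.continuousOn.integrableOn_compact hK

lemma hasFDerivAt_integral_exp_mdot_smul (hK : IsCompact K) (hμ : ∀ᵐ A ∂μ, A ∈ K)
    {E : Type*} [NormedAddCommGroup E] [NormedSpace ℝ E] [CompleteSpace E]
    {g : Mat3 → E} (hg : Continuous g) (J : Mat3) :
    HasFDerivAt (fun x => ∫ A, Real.exp (mdot x A) • g A ∂μ)
      (∫ A, Real.exp (mdot J A) • (mdotL A).smulRight (g A) ∂μ) J := by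
  set F' : Mat3 → Mat3 → Mat3 →L[ℝ] E :=
    fun x A => Real.exp (mdot x A) • (mdotL A).smulRight (g A) with hF'
  have hF'_cont : Continuous fun p : Mat3 × Mat3 => F' p.1 p.2 := by
    have : Continuous fun A => (mdotL A).smulRight (g A) :=
      (ContinuousLinearMap.smulRightL ℝ Mat3 E).continuous₂.comp₂ mdotL.continuous hg
    fun_prop
  obtain ⟨C, hC⟩ := ((isCompact_closedBall J 1).prod hK).exists_bound_of_continuousOn
    hF'_cont.continuousOn
  refine hasFDerivAt_integral_of_dominated_of_fderiv_le (F' := F') (bound := fun _ => C)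
    (Metric.closedBall_mem_nhds J one_pos)
    (.of_forall fun x => Continuous.aestronglyMeasurable (by fun_prop))
    (integrable_of_continuous hK hμ (by fun_prop))
    (Continuous.aestronglyMeasurable (by fun_prop))
    ?_ (integrable_const C) (.of_forall fun A x _ => ?_)
  · filter_upwards [hμ] with A hA x hx using hC (x, A) ⟨hx, hA⟩
  · refine ((hasFDerivAt_mdot_left A x).exp.smul_const (g A)).congr_fderiv ?_
    ext H
    simp [hF', smul_smul]

lemma Z_pos [NeZero μ] (hK : IsCompact K) (hμ : ∀ᵐ A ∂μ, A ∈ K) (J : Mat3) : 0 < Z μ J :=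
  integral_exp_pos (integrable_of_continuous hK hμ (by fun_prop))

lemma vonMises_pos [NeZero μ] (hK : IsCompact K) (hμ : ∀ᵐ A ∂μ, A ∈ K) (J A : Mat3) :
    0 < vonMises μ J A :=
  div_pos (Real.exp_pos _) (Z_pos hK hμ J)

lemma integral_vonMises [NeZero μ] (hK : IsCompact K) (hμ : ∀ᵐ A ∂μ, A ∈ K) (J : Mat3) :
    ∫ A, vonMises μ J A ∂μ = 1 := by
  have h := integral_vonMises_smul μ J fun _ => (1 : ℝ)
  simp only [smul_eq_mul, mul_one] at h
  exact h.trans (inv_mul_cancel₀ (Z_pos hK hμ J).ne')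

lemma Jcal_vonMises (hK : IsCompact K) (hμ : ∀ᵐ A ∂μ, A ∈ K) (J : Mat3) :
    Jcal μ (vonMises μ J) = (Z μ J)⁻¹ • ∫ A, Real.exp (mdot J A) • A ∂μ := by
  rw [Jcal_eq_integral_smul (integrable_of_continuous hK hμ (by fun_prop)),
    integral_vonMises_smul]

lemma integral_vonMises_mul_mdot (hK : IsCompact K) (hμ : ∀ᵐ A ∂μ, A ∈ K) (J B : Mat3) :
    ∫ A, vonMises μ J A * mdot B A ∂μ = mdot B (Jcal μ (vonMises μ J)) := by
  rw [Jcal_eq_integral_smul (integrable_of_continuous hK hμ (by fun_prop)),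
    ← integral_mdot (integrable_of_continuous hK hμ (by fun_prop))]
  simp

lemma hasFDerivAt_Z (hK : IsCompact K) (hμ : ∀ᵐ A ∂μ, A ∈ K) (J : Mat3) :
    HasFDerivAt (Z μ) (mdotL (∫ A, Real.exp (mdot J A) • A ∂μ)) J := by
  have h := hasFDerivAt_integral_exp_mdot_smul hK hμ (g := fun _ => (1 : ℝ)) continuous_const J
  simp only [smul_eq_mul, mul_one] at h
  refine h.congr_fderiv (ContinuousLinearMap.ext fun H => ?_)
  rw [ContinuousLinearMap.integral_apply (integrable_of_continuous hK hμ (by fun_prop)),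
    mdotL_apply, mdot_comm, ← integral_mdot (integrable_of_continuous hK hμ (by fun_prop))]
  simp [mdot_comm H, mul_comm]

lemma hasFDerivAt_log_Z [NeZero μ] (hK : IsCompact K) (hμ : ∀ᵐ A ∂μ, A ∈ K) (J : Mat3) :
    HasFDerivAt (fun x => Real.log (Z μ x)) (mdotL (Jcal μ (vonMises μ J))) J := by
  refine ((hasFDerivAt_Z hK hμ J).log (Z_pos hK hμ J).ne').congr_fderiv ?_
  rw [Jcal_vonMises hK hμ, map_smul]

lemma hasFDerivAt_V [NeZero μ] (hK : IsCompact K) (hμ : ∀ᵐ A ∂μ, A ∈ K) (ρ : ℝ) (J : Mat3) :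
    HasFDerivAt (V μ ρ) (mdotL (J - ρ • Jcal μ (vonMises μ J))) J := by
  refine ((hasFDerivAt_half_mdot_self J).sub
    ((hasFDerivAt_log_Z hK hμ J).const_mul ρ)).congr_fderiv ?_
  rw [map_sub, map_smul]

lemma hasFDerivAt_Jcal_vonMises [NeZero μ] (hK : IsCompact K) (hμ : ∀ᵐ A ∂μ, A ∈ K)
    (J : Mat3) : HasFDerivAt (fun x => Jcal μ (vonMises μ x)) (vonMisesCov μ J) J := by
  have hZ := Z_pos hK hμ J
  have h := ((hasDerivAt_inv hZ.ne').comp_hasFDerivAt J (hasFDerivAt_Z hK hμ J)).smul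
    (hasFDerivAt_integral_exp_mdot_smul hK hμ continuous_id J)
  simp_rw [Jcal_vonMises hK hμ]
  refine h.congr_fderiv (ContinuousLinearMap.ext fun H => ?_)
  simp [vonMisesCov, integral_vonMises_smul, Jcal_vonMises hK hμ, smul_smul]
  module

lemma mdot_vonMisesCov_self [NeZero μ] (hK : IsCompact K) (hμ : ∀ᵐ A ∂μ, A ∈ K)
    (J B : Mat3) :
    mdot B (vonMisesCov μ J B) =
      ∫ A, vonMises μ J A * (mdot B A - mdot B (Jcal μ (vonMises μ J))) ^ 2 ∂μ := by
  set N := Jcal μ (vonMises μ J)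
  have hint {f : Mat3 → ℝ} (hf : Continuous f) : Integrable f μ :=
    integrable_of_continuous hK hμ hf
  calc mdot B (vonMisesCov μ J B)
      = ∫ A, vonMises μ J A * mdot B A ^ 2 ∂μ - mdot B N ^ 2 := by
        rw [vonMisesCov, _root_.sub_apply,
          ContinuousLinearMap.integral_apply (integrable_of_continuous hK hμ (by fun_prop)),
          ← mdotL_apply, map_sub, mdotL_apply,
          ← integral_mdot (integrable_of_continuous hK hμ (by fun_prop))]
        simp [mdot_comm _ B, sq, N]
    _ = ∫ A, (vonMises μ J A * mdot B A ^ 2 - 2 * mdot B N * (vonMises μ J A * mdot B A)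
          + mdot B N ^ 2 * vonMises μ J A) ∂μ := by
        rw [integral_add (hint (by fun_prop)) (hint (by fun_prop)),
          integral_sub (hint (by fun_prop)) (hint (by fun_prop)), integral_const_mul,
          integral_const_mul, integral_vonMises_mul_mdot hK hμ, integral_vonMises hK hμ]
        ring
    _ = _ := by
        congr 1
        funext A
        ring

lemma ae_mdot_eq_of_mdot_vonMisesCov_self_eq_zero [NeZero μ] (hK : IsCompact K)
    (hμ : ∀ᵐ A ∂μ, A ∈ K) {J B : Mat3} (h : mdot B (vonMisesCov μ J B) = 0) :
    ∀ᵐ A ∂μ, mdot B A = mdot B (Jcal μ (vonMises μ J)) := by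
  set m := mdot B (Jcal μ (vonMises μ J))
  have hM := vonMises_pos hK hμ J
  have hint : Integrable (fun A => vonMises μ J A * (mdot B A - m) ^ 2) μ :=
    integrable_of_continuous hK hμ (by fun_prop)
  rw [mdot_vonMisesCov_self hK hμ,
    integral_eq_zero_iff_of_nonneg (fun A => mul_nonneg (hM A).le (sq_nonneg _)) hint] at h
  filter_upwards [h] with A hA
  have := (mul_eq_zero.1 hA).resolve_left (hM A).ne'
  linarith [pow_eq_zero_iff (n := 2) two_ne_zero |>.1 this]

lemma W_eq_V_sub_add [NeZero μ] (hK : IsCompact K) (hμ : ∀ᵐ A ∂μ, A ∈ K) (ρ : ℝ) (J : Mat3) :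
    W μ ρ J = V μ ρ J
      - 1 / 2 * mdot (J - ρ • Jcal μ (vonMises μ J)) (J - ρ • Jcal μ (vonMises μ J))
      + ρ * Real.log ρ := by
  set N := Jcal μ (vonMises μ J)
  have hZ := Z_pos hK hμ J
  have hJcal : Jcal μ (fun A => ρ * vonMises μ J A) = ρ • N := by
    ext i j
    simp [N, Jcal, ← integral_const_mul, mul_assoc]
  have hlog (A : Mat3) : ρ * vonMises μ J A * Real.log (ρ * vonMises μ J A) =
      (ρ * Real.log ρ - ρ * Real.log (Z μ J)) * vonMises μ J A
        + ρ * (vonMises μ J A * mdot J A) := by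
    rcases eq_or_ne ρ 0 with rfl | hρ
    · simp
    rw [Real.log_mul hρ (vonMises_pos hK hμ J A).ne', vonMises,
      Real.log_div (Real.exp_ne_zero _) hZ.ne', Real.log_exp]
    ring
  have hint {f : Mat3 → ℝ} (hf : Continuous f) : Integrable f μ :=
    integrable_of_continuous hK hμ hf
  rw [W, freeEnergy, hJcal, funext hlog,
    integral_add (hint (by fun_prop)) (hint (by fun_prop)),
    integral_const_mul, integral_const_mul, integral_vonMises hK hμ,
    integral_vonMises_mul_mdot hK hμ, V]
  simp only [mdot_sub_left, mdot_sub_right, mdot_smul_left, mdot_smul_right, mdot_comm N J]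
  ring

lemma hasFDerivAt_W [NeZero μ] (hK : IsCompact K) (hμ : ∀ᵐ A ∂μ, A ∈ K) (ρ : ℝ) (J : Mat3) :
    HasFDerivAt (W μ ρ)
      (ρ • (mdotL (J - ρ • Jcal μ (vonMises μ J))).comp (vonMisesCov μ J)) J := by
  have hf := (hasFDerivAt_id J).sub ((hasFDerivAt_Jcal_vonMises hK hμ J).const_smul ρ)
  rw [show W μ ρ = _ from funext (W_eq_V_sub_add hK hμ ρ)]
  refine (((hasFDerivAt_V hK hμ ρ J).sub ((mdotL.hasFDerivAt_of_bilinear hf hf).const_mul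
    (1 / 2))).add_const _).congr_fderiv (ContinuousLinearMap.ext fun H => ?_)
  simp [mdot_comm H, mdot_comm (vonMisesCov μ J H)]
  ring

lemma fderiv_V_eq_zero_iff [NeZero μ] (hK : IsCompact K) (hμ : ∀ᵐ A ∂μ, A ∈ K) (ρ : ℝ)
    (J : Mat3) :
    fderiv ℝ (V μ ρ) J = 0 ↔ J = ρ • Jcal μ (vonMises μ J) := by
  rw [(hasFDerivAt_V hK hμ ρ J).fderiv, mdotL_eq_zero_iff, sub_eq_zero]

end CompactSupport

lemma SO3.abs_apply_le_one {A : Mat3} (hA : A ∈ SO3) (i j : Fin 3) : |A i j| ≤ 1 := by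
  have h := congrFun (congrFun hA.1 j) j
  simp only [mul_apply, transpose_apply, one_apply_eq] at h
  rw [← sq_le_one_iff_abs_le_one, sq, ← h]
  exact Finset.single_le_sum (fun k _ => mul_self_nonneg (A k j)) (Finset.mem_univ i)

lemma isCompact_SO3 : IsCompact SO3 := by
  refine (isCompact_closedBall (0 : Mat3) 1).of_isClosed_subset ?_ fun A hA => ?_
  · exact (isClosed_eq (by fun_prop) continuous_const).inter
      (isClosed_eq (continuous_id.matrix_det) continuous_const)
  · rw [mem_closedBall_zero_iff, norm_le_iff zero_le_one]
    simpa using SO3.abs_apply_le_one hA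

/-- Ten rotations `P` for which the pairs `(P, 1)` span `M₃(ℝ) × ℝ`. -/
def spanningRotations : List Mat3 :=
  [1, !![1, 0, 0; 0, -1, 0; 0, 0, -1], !![-1, 0, 0; 0, 1, 0; 0, 0, -1],
    !![-1, 0, 0; 0, -1, 0; 0, 0, 1], !![0, -1, 0; 1, 0, 0; 0, 0, 1],
    !![0, 1, 0; 1, 0, 0; 0, 0, -1], !![1, 0, 0; 0, 0, -1; 0, 1, 0],
    !![-1, 0, 0; 0, 0, 1; 0, 1, 0], !![0, 0, 1; 0, 1, 0; -1, 0, 0],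
    !![0, 0, 1; 0, -1, 0; 1, 0, 0]]

lemma mem_SO3_of_mem_spanningRotations {P : Mat3} (hP : P ∈ spanningRotations) : P ∈ SO3 := by
  simp only [spanningRotations, List.mem_cons, List.not_mem_nil, or_false] at hP
  rcases hP with rfl | rfl | rfl | rfl | rfl | rfl | rfl | rfl | rfl | rfl <;>
  exact ⟨by ext i j; fin_cases i <;> fin_cases j <;> simp [mul_apply, Fin.sum_univ_three],
    by simp [det_fin_three]⟩

lemma eq_zero_of_mdot_spanningRotations_eq {L : Mat3} {c : ℝ}
    (h : ∀ P ∈ spanningRotations, mdot L P = c) : L = 0 := by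
  simp only [spanningRotations, List.forall_mem_cons, List.not_mem_nil, IsEmpty.forall_iff,
    implies_true, and_true, mdot_eq_sum, Fin.sum_univ_three] at h
  ext i j
  fin_cases i <;> fin_cases j <;> simp at h ⊢ <;> linarith

lemma IsHaarSO3.ae_mem_SO3 {μ : Measure Mat3} (hμ : IsHaarSO3 μ) : ∀ᵐ A ∂μ, A ∈ SO3 :=
  ae_iff.2 hμ.2.1

lemma IsHaarSO3.eq_zero_of_ae_mdot_eq {μ : Measure Mat3} (hμ : IsHaarSO3 μ) {B : Mat3} {c : ℝ}
    (h : ∀ᵐ A ∂μ, mdot B A = c) : B = 0 := by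
  have := hμ.1
  have hrot : ∀ P ∈ SO3, ∀ᵐ A ∂μ, mdot B (P * A) = c := fun P hP => by
    rw [← hμ.2.2 P hP] at h
    exact ae_of_ae_map (by fun_prop : Continuous fun A : Mat3 => P * A).aemeasurable h
  obtain ⟨A, hA, hPA⟩ := (hμ.ae_mem_SO3.and <| (List.finite_toSet _).eventually_all.2
    fun P hP => hrot P (mem_SO3_of_mem_spanningRotations hP)).exists
  have hL : B * Aᵀ = 0 :=
    eq_zero_of_mdot_spanningRotations_eq fun P hP => mdot_mul_right B P A ▸ hPA P hP
  calc B = B * Aᵀ * A := by rw [Matrix.mul_assoc, hA.1, Matrix.mul_one]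
    _ = 0 := by rw [hL, Matrix.zero_mul]

lemma fderiv_W_eq_zero_iff {μ : Measure Mat3} (hμ : IsHaarSO3 μ) {ρ : ℝ} (hρ : ρ ≠ 0)
    (J : Mat3) : fderiv ℝ (W μ ρ) J = 0 ↔ J = ρ • Jcal μ (vonMises μ J) := by
  have := hμ.1
  rw [(hasFDerivAt_W isCompact_SO3 hμ.ae_mem_SO3 ρ J).fderiv, ← sub_eq_zero (a := J)]
  set B := J - ρ • Jcal μ (vonMises μ J)
  refine ⟨fun h => hμ.eq_zero_of_ae_mdot_eq <|
    ae_mdot_eq_of_mdot_vonMisesCov_self_eq_zero (J := J) isCompact_SO3 hμ.ae_mem_SO3 ?_,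
    fun h => ?_⟩
  · simpa [hρ] using congr(($h) B)
  · rw [h, map_zero, ContinuousLinearMap.zero_comp, smul_zero]

end

/-- (i) `W(J) = V(J) − ½∥J − ρ𝒥[M_J]∥² + ρ ln ρ`; (ii) `J` is a critical point of `W` iff
it is a critical point of `V`, iff `J = ρ 𝒥[M_J]` (compatibility equation). -/
theorem W_eq_V_and_critical_points (μ : Measure Mat3) (hμ : IsHaarSO3 μ)
    (ρ : ℝ) (hρ : 0 < ρ) :
    (∀ J : Mat3,
      W μ ρ J = V μ ρ J
        - (1 / 2) * mdot (J - ρ • Jcal μ (vonMises μ J)) (J - ρ • Jcal μ (vonMises μ J))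
        + ρ * Real.log ρ) ∧
    (∀ J : Mat3,
      (fderiv ℝ (W μ ρ) J = 0 ↔ fderiv ℝ (V μ ρ) J = 0) ∧
      (fderiv ℝ (V μ ρ) J = 0 ↔ J = ρ • Jcal μ (vonMises μ J))) := by
  have := hμ.1
  have hV := fderiv_V_eq_zero_iff isCompact_SO3 hμ.ae_mem_SO3 ρ
  exact ⟨W_eq_V_sub_add isCompact_SO3 hμ.ae_mem_SO3 ρ,
    fun J => ⟨(fderiv_W_eq_zero_iff hμ hρ.ne' J).trans (hV J).symm, hV J⟩⟩
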